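/- Let P be a finite path graph with vertices v₁, …, vₙ (n ≥ 2), and let L be a list assignment such that the two endpoint vertices v₁ and vₙ have lists of size at least 1, some internal vertex v_k (1 < k < n) has a list of size at least 3, and every other internal vertex has a list of size at least 2. Then P has a proper L-coloring. -/

import Mathlib

/-!
Color the path greedily from both leaves toward the vertex `k`: every vertex met on the way has
only its already colored predecessor to avoid, so a list of size `2` suffices. Coloring the right
branch first and deleting the color of `k + 1` from the list of `k` leaves `k` with two colors,
so it can be treated as the last vertex of the left branch.
-/

section PathColoring

variable {α : Type*}

def IsProperPathColoring (M : ℕ → Finset α) (m : ℕ) (c : ℕ → α) : Prop :=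
  (∀ i ≤ m, c i ∈ M i) ∧ ∀ i < m, c i ≠ c (i + 1)

theorem exists_isProperPathColoring_of_two_le_card [DecidableEq α] (M : ℕ → Finset α)
    (m : ℕ) (h0 : (M 0).Nonempty) (h : ∀ i, 0 < i → i ≤ m → 2 ≤ (M i).card) :
    ∃ c, IsProperPathColoring M m c := by
  induction m with
  | zero =>
    obtain ⟨a, ha⟩ := h0
    exact ⟨fun _ => a, fun i hi => by simpa [Nat.le_zero.mp hi] using ha,
      fun i hi => absurd hi i.not_lt_zero⟩
  | succ m ih =>
    obtain ⟨c, hmem, hproper⟩ := ih fun i hi him => h i hi (by omega)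
    obtain ⟨y, hy, hyc⟩ := Finset.exists_mem_ne (h (m + 1) (by omega) le_rfl) (c m)
    refine ⟨Function.update c (m + 1) y, fun i hi => ?_, fun i hi => ?_⟩
    · rcases (by omega : i ≤ m ∨ i = m + 1) with hi | rfl
      · simpa [Function.update_of_ne (by omega : i ≠ m + 1)] using hmem i hi
      · simpa using hy
    · rcases (by omega : i < m ∨ i = m) with hi | rfl
      · simpa [Function.update_of_ne (by omega : i ≠ m + 1),
          Function.update_of_ne (by omega : i + 1 ≠ m + 1)] using hproper i hi
      · simpa using hyc.symm

theorem exists_isProperPathColoring_of_three_le_card [DecidableEq α] (M : ℕ → Finset α)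
    (m k : ℕ) (hk0 : 0 < k) (hkm : k < m) (h0 : (M 0).Nonempty) (hm : (M m).Nonempty)
    (hk : 3 ≤ (M k).card) (hint : ∀ i, 0 < i → i < m → i ≠ k → 2 ≤ (M i).card) :
    ∃ c, IsProperPathColoring M m c := by
  obtain ⟨cR, hRmem, hRproper⟩ := exists_isProperPathColoring_of_two_le_card
    (fun j => M (m - j)) (m - k - 1) (by simpa using hm)
    fun j hj hjk => hint _ (by omega) (by omega) (by omega)
  -- `cR` colors the right branch reversed, so `y` is the color of `k + 1`
  set y := cR (m - k - 1) with hy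
  obtain ⟨cL, hLmem, hLproper⟩ := exists_isProperPathColoring_of_two_le_card
    (Function.update M k ((M k).erase y)) k (by simpa [Function.update_of_ne hk0.ne] using h0)
    fun i hi hle => by
      rcases (by omega : i < k ∨ i = k) with hik | rfl
      · simpa [Function.update_of_ne hik.ne] using hint i hi (by omega) hik.ne
      · have := Finset.pred_card_le_card_erase (s := M i) (a := y)
        simp only [Function.update_self]
        omega
  refine ⟨fun i => if i ≤ k then cL i else cR (m - i), fun i hi => ?_, fun i hi => ?_⟩
  · by_cases hik : i ≤ k
    · have := hLmem i hik
      rcases hik.lt_or_eq with hik | rfl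
      · simpa [hik.le, Function.update_of_ne hik.ne] using this
      · simpa using Finset.mem_of_mem_erase (by simpa using this)
    · have := hRmem (m - i) (by omega)
      simpa [hik, Nat.sub_sub_self hi] using this
  · rcases (by omega : i + 1 ≤ k ∨ i = k ∨ k < i) with hik | rfl | hik
    · simpa [hik, (by omega : i ≤ k)] using hLproper i hik
    · have := Finset.ne_of_mem_erase (by simpa using hLmem i le_rfl)
      simpa [hy, (by omega : m - (i + 1) = m - i - 1)] using this
    · have := hRproper (m - i - 1) (by omega)
      dsimp only
      rw [if_neg (by omega), if_neg (by omega), (by omega : m - (i + 1) = m - i - 1)]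
      simpa [(by omega : m - i - 1 + 1 = m - i)] using this.symm

end PathColoring

/-- A path `v₁ … vₙ` (`n ≥ 2`) whose endpoints have lists of size ≥ 1, some
internal vertex has a list of size ≥ 3, and all other internal vertices have
lists of size ≥ 2, admits a proper coloring from the lists. -/
theorem stmt_3 {α : Type*} [DecidableEq α] (n : ℕ) (hn : 2 ≤ n)
    (L : Fin n → Finset α) (k : Fin n) (hk0 : 0 < (k : ℕ)) (hkn : (k : ℕ) < n - 1)
    (hend1 : 1 ≤ (L ⟨0, by omega⟩).card)
    (hend2 : 1 ≤ (L ⟨n - 1, by omega⟩).card)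
    (hk : 3 ≤ (L k).card)
    (hint : ∀ i : Fin n, 0 < (i : ℕ) → (i : ℕ) < n - 1 → i ≠ k → 2 ≤ (L i).card) :
    ∃ φ : Fin n → α, (∀ v, φ v ∈ L v) ∧
      ∀ u v, (SimpleGraph.pathGraph n).Adj u v → φ u ≠ φ v := by
  let M : ℕ → Finset α := fun i => if h : i < n then L ⟨i, h⟩ else ∅
  have hM (i : ℕ) (h : i < n) : M i = L ⟨i, h⟩ := dif_pos h
  obtain ⟨c, hmem, hproper⟩ := exists_isProperPathColoring_of_three_le_card M (n - 1) k hk0 hkn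
    (hM 0 (by omega) ▸ Finset.card_pos.mp hend1)
    (hM (n - 1) (by omega) ▸ Finset.card_pos.mp hend2)
    (hM k k.isLt ▸ hk) fun i hi0 hi hik => hM i (by omega) ▸ hint ⟨i, by omega⟩ hi0 hi
      (Fin.ne_of_val_ne hik)
  refine ⟨fun v => c v, fun v => hM v v.isLt ▸ hmem v (by omega), fun u v huv => ?_⟩
  rcases SimpleGraph.pathGraph_adj.mp huv with h | h
  · simpa [← h] using hproper u (by omega)
  · simpa [← h] using (hproper v (by omega)).symm
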